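/- Let Λ_0 = +∞ and Λ_1 > … > Λ_n > 0 with all Λ_p ∈ (1/2)ℤ and Λ_p − Λ_{p+1} ∈ ℤ_{>0}. For 1 ≤ i ≤ n define K_i as the set of tuples λ = (λ_1, …, λ_n) with λ_p ∈ (1/2)ℤ such that Λ_{p-1} − n + p − 1/2 ≥ λ_p ≥ Λ_p − n + p + 1/2 for 1 ≤ p ≤ i−1, Λ_p − n + p − 1/2 ≥ λ_p ≥ Λ_{p+1} − n + p + 1/2 for i ≤ p ≤ n−1, and Λ_n − 1/2 ≥ |λ_n|. Also define K(π_0) by Λ_{p-1} − n + p − 1/2 ≥ λ_p ≥ Λ_p − n + p + 1/2 for 1 ≤ p ≤ n, and K(π_1) by the same for p ≤ n−1 together with −Λ_n − 1/2 ≥ λ_n ≥ −Λ_{n-1} + 1/2. Then the sets K_1, …, K_n, K(π_0), K(π_1) are pairwise disjoint. -/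

import Mathlib

/-- The `K`-spectrum of `π̄_{0,i}` for `Spin(2n,1)` (Theorem 2.6(2)); `Λ_0 = ∞` is
encoded by omitting the upper bound at `p = 1`. Entries are half-integers. -/
def Kspec (n i : ℕ) (Λ : ℕ → ℝ) : Set (ℕ → ℝ) :=
  {lm | (∀ p, 1 ≤ p → p ≤ n → ∃ z : ℤ, 2 * lm p = z) ∧
    (∀ p, 2 ≤ p → p ≤ i - 1 → Λ (p-1) - n + p - 1/2 ≥ lm p) ∧
    (∀ p, 1 ≤ p → p ≤ i - 1 → lm p ≥ Λ p - n + p + 1/2) ∧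
    (∀ p, i ≤ p → p ≤ n - 1 →
      Λ p - n + p - 1/2 ≥ lm p ∧ lm p ≥ Λ (p+1) - n + p + 1/2) ∧
    Λ n - 1/2 ≥ |lm n|}

/-- The `K`-spectrum of the discrete series `π_0` (Theorem 2.6(1)). -/
def KspecDS0 (n : ℕ) (Λ : ℕ → ℝ) : Set (ℕ → ℝ) :=
  {lm | (∀ p, 1 ≤ p → p ≤ n → ∃ z : ℤ, 2 * lm p = z) ∧
    (∀ p, 2 ≤ p → p ≤ n → Λ (p-1) - n + p - 1/2 ≥ lm p) ∧
    (∀ p, 1 ≤ p → p ≤ n → lm p ≥ Λ p - n + p + 1/2)}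

/-- The `K`-spectrum of the discrete series `π_1` (Theorem 2.6(1)). -/
def KspecDS1 (n : ℕ) (Λ : ℕ → ℝ) : Set (ℕ → ℝ) :=
  {lm | (∀ p, 1 ≤ p → p ≤ n → ∃ z : ℤ, 2 * lm p = z) ∧
    (∀ p, 2 ≤ p → p ≤ n - 1 → Λ (p-1) - n + p - 1/2 ≥ lm p) ∧
    (∀ p, 1 ≤ p → p ≤ n - 1 → lm p ≥ Λ p - n + p + 1/2) ∧
    -Λ n - 1/2 ≥ lm n ∧ lm n ≥ -Λ (n-1) + 1/2}

/-!
Each pair of spectra is separated by a single coordinate. For `i < j`, the coordinate `λ_i`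
lies in `(-∞, Λ_i - n + i - 1/2]` on `K_i` but in `[Λ_i - n + i + 1/2, ∞)` on `K_j`; the same
coordinate separates `K_i` from `K(π_0)` when `i < n`. At the last coordinate, `K_n` (indeed
every `K_i`) has `|λ_n| ≤ Λ_n - 1/2`, `K(π_0)` has `λ_n ≥ Λ_n + 1/2` and `K(π_1)` has
`λ_n ≤ -Λ_n - 1/2`, and these are mutually exclusive once `Λ_n > 0`.
-/

section

variable {n i p : ℕ} {Λ lm : ℕ → ℝ}

namespace Kspec

theorem apply_le (h : lm ∈ Kspec n i Λ) (hip : i ≤ p) (hpn : p < n) :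
    lm p ≤ Λ p - n + p - 1/2 :=
  (h.2.2.2.1 p hip (by omega)).1

theorem le_apply (h : lm ∈ Kspec n i Λ) (hp : 1 ≤ p) (hpi : p < i) :
    Λ p - n + p + 1/2 ≤ lm p :=
  h.2.2.1 p hp (by omega)

theorem abs_apply_le (h : lm ∈ Kspec n i Λ) : |lm n| ≤ Λ n - 1/2 :=
  h.2.2.2.2

end Kspec

theorem KspecDS0.le_apply (h : lm ∈ KspecDS0 n Λ) (hp : 1 ≤ p) (hpn : p ≤ n) :
    Λ p - n + p + 1/2 ≤ lm p :=
  h.2.2 p hp hpn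

theorem KspecDS1.apply_le (h : lm ∈ KspecDS1 n Λ) : lm n ≤ -Λ n - 1/2 :=
  h.2.2.2.1

theorem Kspec_disjoint_Kspec_of_lt {j : ℕ} (hi : 1 ≤ i) (hij : i < j) (hjn : j ≤ n) :
    Disjoint (Kspec n i Λ) (Kspec n j Λ) :=
  Set.disjoint_left.mpr fun _ hKi hKj => by
    have := Kspec.apply_le hKi le_rfl (by omega)
    have := Kspec.le_apply hKj hi hij
    linarith

theorem Kspec_disjoint_KspecDS0 (hi : 1 ≤ i) (hin : i ≤ n) :
    Disjoint (Kspec n i Λ) (KspecDS0 n Λ) :=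
  Set.disjoint_left.mpr fun lm hK hDS => by
    rcases hin.lt_or_eq with hin | rfl
    · have := Kspec.apply_le hK le_rfl hin
      have := KspecDS0.le_apply hDS hi hin.le
      linarith
    · have := (abs_le.mp (Kspec.abs_apply_le hK)).2
      have := KspecDS0.le_apply hDS hi le_rfl
      linarith

theorem Kspec_disjoint_KspecDS1 : Disjoint (Kspec n i Λ) (KspecDS1 n Λ) :=
  Set.disjoint_left.mpr fun _ hK hDS => by
    have := (abs_le.mp (Kspec.abs_apply_le hK)).1
    have := KspecDS1.apply_le hDS
    linarith

theorem KspecDS0_disjoint_KspecDS1 (hn : 1 ≤ n) (hpos : 0 < Λ n) :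
    Disjoint (KspecDS0 n Λ) (KspecDS1 n Λ) :=
  Set.disjoint_left.mpr fun _ hDS0 hDS1 => by
    have := KspecDS0.le_apply hDS0 hn le_rfl
    have := KspecDS1.apply_le hDS1
    linarith

end

theorem Kspectra_pairwise_disjoint_general (n : ℕ) (hn : 2 ≤ n) (Λ : ℕ → ℝ)
    (hpos : 0 < Λ n) :
    (∀ i j, 1 ≤ i → i ≤ n → 1 ≤ j → j ≤ n → i ≠ j →
        Kspec n i Λ ∩ Kspec n j Λ = ∅) ∧
    (∀ i, 1 ≤ i → i ≤ n →
        Kspec n i Λ ∩ KspecDS0 n Λ = ∅ ∧ Kspec n i Λ ∩ KspecDS1 n Λ = ∅) ∧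
    KspecDS0 n Λ ∩ KspecDS1 n Λ = ∅ := by
  simp only [← Set.disjoint_iff_inter_eq_empty]
  refine ⟨fun i j hi hin hj hjn hij => ?_,
    fun i hi hin => ⟨Kspec_disjoint_KspecDS0 hi hin, Kspec_disjoint_KspecDS1⟩,
    KspecDS0_disjoint_KspecDS1 (by omega) hpos⟩
  rcases hij.lt_or_gt with hij | hji
  · exact Kspec_disjoint_Kspec_of_lt hi hij hjn
  · exact (Kspec_disjoint_Kspec_of_lt hj hji hin).symm

/-- The `K`-spectra `K_1, …, K_n, K(π_0), K(π_1)` are pairwise disjoint. -/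
theorem Kspectra_pairwise_disjoint (n : ℕ) (hn : 2 ≤ n) (Λ : ℕ → ℝ)
    (hhalf : ∀ p, 1 ≤ p → p ≤ n → ∃ z : ℤ, 2 * Λ p = z)
    (hgap : ∀ p, 1 ≤ p → p ≤ n - 1 → ∃ z : ℤ, Λ p - Λ (p+1) = z ∧ (0:ℝ) < z)
    (hpos : 0 < Λ n) :
    (∀ i j, 1 ≤ i → i ≤ n → 1 ≤ j → j ≤ n → i ≠ j →
        Kspec n i Λ ∩ Kspec n j Λ = ∅) ∧
    (∀ i, 1 ≤ i → i ≤ n →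
        Kspec n i Λ ∩ KspecDS0 n Λ = ∅ ∧ Kspec n i Λ ∩ KspecDS1 n Λ = ∅) ∧
    KspecDS0 n Λ ∩ KspecDS1 n Λ = ∅ :=
  Kspectra_pairwise_disjoint_general n hn Λ hpos
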